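/- arXiv:1507.03862 — 5 statements merged into one kernel-verified Lean document; each statement's English description precedes it below -/
import Mathlib

section
/- Let 𝒳 be a full additive subcategory of an abelian category 𝒜. A cochain complex A• in 𝒜 is right 𝒳-acyclic (Hom(X, A•) is acyclic for every X ∈ 𝒳) if and only if the Hom-complex Hom(X•, A•) is acyclic for every bounded-above complex X• with components in 𝒳. -/
open CategoryTheory Limits

universe v u

variable {A : Type u} [Category.{v} A] [Abelian A]

/-- `Hom(X, -)` for `X ∈ 𝒳` carries the short complex `S` to a short exact
sequence of abelian groups. -/
def SESRightAcyclic (𝒳 : Set A) (S : ShortComplex A) : Prop :=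
  ∀ X ∈ 𝒳,
    (Function.Injective fun h : X ⟶ S.X₁ => h ≫ S.f) ∧
    (∀ h : X ⟶ S.X₂, h ≫ S.g = 0 → ∃ k : X ⟶ S.X₁, k ≫ S.f = h) ∧
    (Function.Surjective fun h : X ⟶ S.X₂ => h ≫ S.g)

/-- `Hom(-, Y)` for `Y ∈ 𝒴` carries the short complex `S` to a short exact
sequence of abelian groups. -/
def SESLeftAcyclic (𝒴 : Set A) (S : ShortComplex A) : Prop :=
  ∀ Y ∈ 𝒴,
    (Function.Injective fun h : S.X₃ ⟶ Y => S.g ≫ h) ∧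
    (∀ h : S.X₂ ⟶ Y, S.f ≫ h = 0 → ∃ k : S.X₃ ⟶ Y, S.g ≫ k = h) ∧
    (Function.Surjective fun h : S.X₂ ⟶ Y => S.f ≫ h)

/-- A `⁎`-acyclic short exact sequence: short exact, right `𝒳`-acyclic and
left `𝒴`-acyclic. -/
def SESStarAcyclic (𝒳 𝒴 : Set A) (S : ShortComplex A) : Prop :=
  S.ShortExact ∧ SESRightAcyclic 𝒳 S ∧ SESLeftAcyclic 𝒴 S

/-- A cochain complex `C` is right `𝒳`-acyclic if `Hom(X, C)` is acyclic for every `X ∈ 𝒳`. -/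
def RightAcyclicComplex (𝒳 : Set A) (C : CochainComplex A ℤ) : Prop :=
  ∀ X ∈ 𝒳, ∀ n : ℤ, ∀ h : X ⟶ C.X n, h ≫ C.d n (n + 1) = 0 →
    ∃ k : X ⟶ C.X (n - 1), k ≫ C.d (n - 1) n = h

/-- A cochain complex `C` is left `𝒴`-acyclic if `Hom(C, Y)` is acyclic for every `Y ∈ 𝒴`. -/
def LeftAcyclicComplex (𝒴 : Set A) (C : CochainComplex A ℤ) : Prop :=
  ∀ Y ∈ 𝒴, ∀ n : ℤ, ∀ h : C.X n ⟶ Y, C.d (n - 1) n ≫ h = 0 →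
    ∃ k : C.X (n + 1) ⟶ Y, C.d n (n + 1) ≫ k = h

/-- `f` is a right `𝒳`-quasi-isomorphism iff its mapping cone is right `𝒳`-acyclic. -/
noncomputable def RightQuasiIso (𝒳 : Set A) {C D : CochainComplex A ℤ} (f : C ⟶ D) : Prop :=
  RightAcyclicComplex 𝒳 (CochainComplex.mappingCone f)

/-- `f` is a `⁎`-quasi-isomorphism: its mapping cone is right `𝒳`-acyclic and left `𝒴`-acyclic. -/
noncomputable def StarQuasiIso (𝒳 𝒴 : Set A) {C D : CochainComplex A ℤ} (f : C ⟶ D) : Prop :=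
  RightAcyclicComplex 𝒳 (CochainComplex.mappingCone f) ∧
    LeftAcyclicComplex 𝒴 (CochainComplex.mappingCone f)

/-- A bounded-above complex with all components in `𝒳`. -/
def MinusComplexIn (𝒳 : Set A) (C : CochainComplex A ℤ) : Prop :=
  (∃ b : ℤ, ∀ i : ℤ, b < i → IsZero (C.X i)) ∧ ∀ i : ℤ, C.X i ∈ 𝒳

/-- A bounded complex. -/
def BoundedComplex (C : CochainComplex A ℤ) : Prop :=
  ∃ a b : ℤ, ∀ i : ℤ, i < a ∨ b < i → IsZero (C.X i)

/-- A proper `𝒳`-resolution `⋯ → P⁻¹ → P⁰ —ε→ M → 0`: the components of `P` in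
nonpositive degrees lie in `𝒳`, the positive components vanish, and the augmented
complex is right `𝒳`-acyclic. -/
def IsProperXResolution (𝒳 : Set A) (M : A) (P : CochainComplex A ℤ) (ε : P.X 0 ⟶ M) : Prop :=
  (∀ i : ℤ, 0 < i → IsZero (P.X i)) ∧ (∀ i : ℤ, i ≤ 0 → P.X i ∈ 𝒳) ∧
  P.d (-1) 0 ≫ ε = 0 ∧
  ∀ X ∈ 𝒳,
    (∀ h : X ⟶ M, ∃ k : X ⟶ P.X 0, k ≫ ε = h) ∧
    (∀ h : X ⟶ P.X 0, h ≫ ε = 0 → ∃ k : X ⟶ P.X (-1), k ≫ P.d (-1) 0 = h) ∧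
    (∀ n : ℤ, n < 0 → ∀ h : X ⟶ P.X n, h ≫ P.d n (n + 1) = 0 →
      ∃ k : X ⟶ P.X (n - 1), k ≫ P.d (n - 1) n = h)

/-- The augmented complex `⋯ → P⁻¹ → P⁰ —ε→ M → 0` is left `𝒴`-acyclic. -/
def AugResLeftAcyclic (𝒴 : Set A) (M : A) (P : CochainComplex A ℤ) (ε : P.X 0 ⟶ M) : Prop :=
  ∀ Y ∈ 𝒴,
    (∀ h : M ⟶ Y, ε ≫ h = 0 → h = 0) ∧
    (∀ h : P.X 0 ⟶ Y, P.d (-1) 0 ≫ h = 0 → ∃ k : M ⟶ Y, ε ≫ k = h) ∧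
    (∀ n : ℤ, n < 0 → ∀ h : P.X n ⟶ Y, P.d (n - 1) n ≫ h = 0 →
      ∃ k : P.X (n + 1) ⟶ Y, P.d n (n + 1) ≫ k = h)

/-- A proper `𝒴`-coresolution `0 → N —η→ Q⁰ → Q¹ → ⋯`. -/
def IsProperYCoresolution (𝒴 : Set A) (N : A) (Q : CochainComplex A ℤ) (η : N ⟶ Q.X 0) : Prop :=
  (∀ i : ℤ, i < 0 → IsZero (Q.X i)) ∧ (∀ i : ℤ, 0 ≤ i → Q.X i ∈ 𝒴) ∧
  η ≫ Q.d 0 1 = 0 ∧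
  ∀ Y ∈ 𝒴,
    (∀ h : N ⟶ Y, ∃ k : Q.X 0 ⟶ Y, η ≫ k = h) ∧
    (∀ h : Q.X 0 ⟶ Y, η ≫ h = 0 → ∃ k : Q.X 1 ⟶ Y, Q.d 0 1 ≫ k = h) ∧
    (∀ n : ℤ, 0 < n → ∀ h : Q.X n ⟶ Y, Q.d (n - 1) n ≫ h = 0 →
      ∃ k : Q.X (n + 1) ⟶ Y, Q.d n (n + 1) ≫ k = h)

/-- The augmented complex `0 → N —η→ Q⁰ → Q¹ → ⋯` is right `𝒳`-acyclic. -/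
def AugCoresRightAcyclic (𝒳 : Set A) (N : A) (Q : CochainComplex A ℤ) (η : N ⟶ Q.X 0) : Prop :=
  ∀ X ∈ 𝒳,
    (∀ h : X ⟶ N, h ≫ η = 0 → h = 0) ∧
    (∀ h : X ⟶ Q.X 0, h ≫ Q.d 0 1 = 0 → ∃ k : X ⟶ N, k ≫ η = h) ∧
    (∀ n : ℤ, 0 < n → ∀ h : X ⟶ Q.X n, h ≫ Q.d n (n + 1) = 0 →
      ∃ k : X ⟶ Q.X (n - 1), k ≫ Q.d (n - 1) n = h)

/-- `f : X ⟶ M` is a right `𝒳`-approximation of `M`. -/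
def IsRightApprox (𝒳 : Set A) {X M : A} (f : X ⟶ M) : Prop :=
  X ∈ 𝒳 ∧ ∀ X' ∈ 𝒳, ∀ g : X' ⟶ M, ∃ h : X' ⟶ X, h ≫ f = g

/-- `f : M ⟶ Y` is a left `𝒴`-approximation of `M`. -/
def IsLeftApprox (𝒴 : Set A) {M Y : A} (f : M ⟶ Y) : Prop :=
  Y ∈ 𝒴 ∧ ∀ Y' ∈ 𝒴, ∀ g : M ⟶ Y', ∃ h : Y ⟶ Y', f ≫ h = g

/-- A minimal (right minimal) right `𝒳`-approximation. -/
def IsMinimalRightApprox (𝒳 : Set A) {X M : A} (f : X ⟶ M) : Prop :=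
  IsRightApprox 𝒳 f ∧ ∀ s : X ⟶ X, s ≫ f = f → IsIso s

/-- A minimal (left minimal) left `𝒴`-approximation. -/
def IsMinimalLeftApprox (𝒴 : Set A) {M Y : A} (f : M ⟶ Y) : Prop :=
  IsLeftApprox 𝒴 f ∧ ∀ s : Y ⟶ Y, f ≫ s = f → IsIso s

/-- `(𝒳, 𝒴)` is a balanced pair: `𝒳` is contravariantly finite, `𝒴` is covariantly
finite, every object has a left `𝒴`-acyclic proper `𝒳`-resolution and a right
`𝒳`-acyclic proper `𝒴`-coresolution. -/
def IsBalancedPair (𝒳 𝒴 : Set A) : Prop :=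
  (∀ M : A, ∃ (X : A) (f : X ⟶ M), IsRightApprox 𝒳 f) ∧
  (∀ M : A, ∃ (Y : A) (f : M ⟶ Y), IsLeftApprox 𝒴 f) ∧
  (∀ M : A, ∃ (P : CochainComplex A ℤ) (ε : P.X 0 ⟶ M),
    IsProperXResolution 𝒳 M P ε ∧ AugResLeftAcyclic 𝒴 M P ε) ∧
  (∀ N : A, ∃ (Q : CochainComplex A ℤ) (η : N ⟶ Q.X 0),
    IsProperYCoresolution 𝒴 N Q η ∧ AugCoresRightAcyclic 𝒳 N Q η)

/-- Vanishing of the relative Ext group `Ext⁎ⁱ(M, N)`: the `i`-th cohomology of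
`Hom(P, N)` vanishes for every proper `𝒳`-resolution `P` of `M`. -/
def ExtStarVanish (𝒳 : Set A) (i : ℕ) (M N : A) : Prop :=
  ∀ (P : CochainComplex A ℤ) (ε : P.X 0 ⟶ M), IsProperXResolution 𝒳 M P ε →
    ∀ h : P.X (-(i : ℤ)) ⟶ N, P.d (-(i : ℤ) - 1) (-(i : ℤ)) ≫ h = 0 →
      ∃ k : P.X (-(i : ℤ) + 1) ⟶ N, P.d (-(i : ℤ)) (-(i : ℤ) + 1) ≫ k = h

/-- A cotorsion pair relative to the balanced pair `(𝒳, 𝒴)`, defined by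
orthogonality with respect to `Ext⁎¹`. -/
def IsRelCotorsionPair (𝒳 𝒞 𝒟 : Set A) : Prop :=
  (∀ C : A, C ∈ 𝒞 ↔ ∀ D ∈ 𝒟, ExtStarVanish 𝒳 1 C D) ∧
  (∀ D : A, D ∈ 𝒟 ↔ ∀ C ∈ 𝒞, ExtStarVanish 𝒳 1 C D)

/-- `𝒳` is admissible: every right `𝒳`-approximation is an epimorphism. -/
def XAdmissible (𝒳 : Set A) : Prop :=
  ∀ (X M : A) (f : X ⟶ M), IsRightApprox 𝒳 f → Epi f

/-- `𝒴` is coadmissible: every left `𝒴`-approximation is a monomorphism. -/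
def YCoadmissible (𝒴 : Set A) : Prop :=
  ∀ (M Y : A) (f : M ⟶ Y), IsLeftApprox 𝒴 f → Mono f

/-- `𝒳`-resolution dimension of `M` is at most `n`. -/
def XResdimLE (𝒳 : Set A) (n : ℕ) (M : A) : Prop :=
  ∃ (P : CochainComplex A ℤ) (ε : P.X 0 ⟶ M),
    IsProperXResolution 𝒳 M P ε ∧ ∀ i : ℤ, i < -(n : ℤ) → IsZero (P.X i)

/-- `𝒴`-coresolution dimension of `N` is at most `n`. -/
def YCoresdimLE (𝒴 : Set A) (n : ℕ) (N : A) : Prop :=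
  ∃ (Q : CochainComplex A ℤ) (η : N ⟶ Q.X 0),
    IsProperYCoresolution 𝒴 N Q η ∧ ∀ i : ℤ, (n : ℤ) < i → IsZero (Q.X i)

/-!
A cocycle `z` of `Hom(X•, A•)` with `X•` bounded above is a coboundary: a primitive `g` is built
by descending recursion on the degree, starting with `g = 0` above the bound of `X•`. Once
`g` is known in degree `p + 1`, the map `z.v p - ± d_X ≫ g.v (p + 1)` is a cycle of
`Hom(Xᵖ, A•)`, so right `𝒳`-acyclicity lifts it to the component of `g` in degree `p`.
Conversely, `Hom(X, A•)` is the Hom complex from `X` placed in degree `0`.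
-/

open CochainComplex HomComplex

noncomputable def Int.downwardRec {T : ℤ → Sort*} (b : ℤ) (x₀ : ∀ p, T p)
    (step : ∀ p, T (p + 1) → T p) (p : ℤ) : T p :=
  if b < p then x₀ p else step p (Int.downwardRec b x₀ step (p + 1))
termination_by (b + 1 - p).toNat

theorem Int.downwardRec_rel {T : ℤ → Sort*} (R : ∀ p, T p → T (p + 1) → Prop) (b : ℤ)
    (x₀ : ∀ p, T p) (step : ∀ p, T (p + 1) → T p)
    (hbase : ∀ p, b < p → R p (x₀ p) (x₀ (p + 1)))
    (hstep : ∀ p y z, R (p + 1) y z → R p (step p y) y) (p : ℤ) :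
    R p (Int.downwardRec b x₀ step p) (Int.downwardRec b x₀ step (p + 1)) := by
  by_cases hp : b < p
  · rw [Int.downwardRec, if_pos hp, Int.downwardRec, if_pos (by omega)]
    exact hbase p hp
  · rw [Int.downwardRec, if_neg hp]
    exact hstep p _ _ (Int.downwardRec_rel R b x₀ step hbase hstep (p + 1))
termination_by (b + 1 - p).toNat

theorem Int.exists_forall_rel_succ {T : ℤ → Sort*} (R : ∀ p, T p → T (p + 1) → Prop) (b : ℤ)
    (x₀ : ∀ p, T p) (hbase : ∀ p, b < p → R p (x₀ p) (x₀ (p + 1)))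
    (hstep : ∀ p y z, R (p + 1) y z → ∃ x, R p x y) :
    ∃ x : ∀ p, T p, ∀ p, R p (x p) (x (p + 1)) := by
  classical
  let step p (y : T (p + 1)) : T p := if h : ∃ x, R p x y then h.choose else x₀ p
  refine ⟨Int.downwardRec b x₀ step, Int.downwardRec_rel R b x₀ step hbase fun p y z hyz => ?_⟩
  have h : ∃ x, R p x y := hstep p y z hyz
  simpa only [step, dif_pos h] using h.choose_spec

namespace CochainComplex.HomComplex

variable {𝒞 : Type*} [Category 𝒞] [Preadditive 𝒞] {K L : CochainComplex 𝒞 ℤ}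

theorem exactAt_iff (n : ℤ) :
    (HomComplex K L).ExactAt n ↔
      ∀ z : Cochain K L n, δ n (n + 1) z = 0 → ∃ g : Cochain K L (n - 1), δ (n - 1) n g = z := by
  rw [HomologicalComplex.exactAt_iff' _ (n - 1) n (n + 1) (by simp) (by simp),
    ShortComplex.ab_exact_iff]
  rfl

variable {n : ℤ}

/-- `x`, `y` are the components in degrees `p`, `p + 1` of an `(n - 1)`-cochain `g` with
`(δ g).v p = z.v p`. -/
def IsPrimitiveAt (z : Cochain K L n) (p : ℤ) (x : ∀ q, p + (n - 1) = q → (K.X p ⟶ L.X q))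
    (y : ∀ q, p + 1 + (n - 1) = q → (K.X (p + 1) ⟶ L.X q)) : Prop :=
  ∀ q₀ q (h₀ : p + (n - 1) = q₀) (h : p + n = q),
    x q₀ h₀ ≫ L.d q₀ q + n.negOnePow • K.d p (p + 1) ≫ y q (by omega) = z.v p q h

theorem exists_isPrimitiveAt {z : Cochain K L n} (hz : δ n (n + 1) z = 0) (p : ℤ)
    (hlift : ∀ h : K.X p ⟶ L.X (p + n), h ≫ L.d (p + n) (p + n + 1) = 0 →
      ∃ k : K.X p ⟶ L.X (p + n - 1), k ≫ L.d (p + n - 1) (p + n) = h)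
    {y y'} (hy : IsPrimitiveAt z (p + 1) y y') : ∃ x, IsPrimitiveAt z p x y := by
  set w := z.v p (p + n) rfl - n.negOnePow • K.d p (p + 1) ≫ y (p + n) (by omega)
  have hy' : y (p + n) (by omega) ≫ L.d (p + n) (p + n + 1) =
      z.v (p + 1) (p + n + 1) (by omega) -
        n.negOnePow • K.d (p + 1) (p + 1 + 1) ≫ y' (p + n + 1) (by omega) :=
    eq_sub_of_add_eq (hy _ _ _ _)
  have hz' := Cochain.congr_v hz p (p + n + 1) (by omega)
  rw [δ_v n (n + 1) rfl z p _ _ (p + n) (p + 1) (by omega) rfl, Int.negOnePow_succ] at hz'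
  obtain ⟨k, hk⟩ : ∃ k : K.X p ⟶ L.X (p + n - 1), k ≫ L.d (p + n - 1) (p + n) = w := by
    refine hlift w ?_
    simp only [w, Preadditive.sub_comp, Category.assoc, Linear.units_smul_comp, hy',
      Preadditive.comp_sub, Linear.comp_units_smul, HomologicalComplex.d_comp_d_assoc]
    simpa [sub_eq_add_neg] using hz'
  refine ⟨fun q₀ h₀ => k ≫ eqToHom (by rw [← h₀, add_sub_assoc]), ?_⟩
  rintro q₀ q h₀ rfl
  obtain rfl : q₀ = p + n - 1 := by omega
  simp [hk, w]

theorem exists_δ_eq_of_boundedAbove (b : ℤ) (hK : ∀ p, b < p → IsZero (K.X p))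
    (hlift : ∀ p (h : K.X p ⟶ L.X (p + n)), h ≫ L.d (p + n) (p + n + 1) = 0 →
      ∃ k : K.X p ⟶ L.X (p + n - 1), k ≫ L.d (p + n - 1) (p + n) = h)
    (z : Cochain K L n) (hz : δ n (n + 1) z = 0) :
    ∃ g : Cochain K L (n - 1), δ (n - 1) n g = z := by
  obtain ⟨x, hx⟩ := Int.exists_forall_rel_succ (IsPrimitiveAt z) b (fun _ _ _ => 0)
    (fun p hp _ _ _ _ => (hK p hp).eq_of_src _ _)
    (fun p _ _ hy => exists_isPrimitiveAt hz p (hlift p) hy)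
  refine ⟨Cochain.mk x, ?_⟩
  ext p q hpq
  rw [δ_v (n - 1) n (by omega) _ p q hpq (q - 1) (p + 1) rfl rfl]
  exact hx p _ _ _ hpq

end CochainComplex.HomComplex

theorem RightAcyclicComplex.homComplex_exactAt {𝒳 : Set A} {C X : CochainComplex A ℤ}
    (hC : RightAcyclicComplex 𝒳 C) (hX : MinusComplexIn 𝒳 X) (n : ℤ) :
    (HomComplex X C).ExactAt n := by
  obtain ⟨⟨b, hb⟩, hmem⟩ := hX
  exact (exactAt_iff n).2 <|
    exists_δ_eq_of_boundedAbove b hb fun p => hC (X.X p) (hmem p) (p + n)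

theorem minusComplexIn_single {𝒳 : Set A} (h0 : ∀ Z : A, IsZero Z → Z ∈ 𝒳) {X : A}
    (hX : X ∈ 𝒳) : MinusComplexIn 𝒳 ((singleFunctor A 0).obj X) := by
  refine ⟨⟨0, fun i hi => HomologicalComplex.isZero_single_obj_X _ _ _ _ (by omega)⟩, fun i => ?_⟩
  by_cases hi : i = 0
  · subst hi
    change ((HomologicalComplex.single A (.up ℤ) 0).obj X).X 0 ∈ 𝒳
    rwa [HomologicalComplex.single_obj_X_self]
  · exact h0 _ (HomologicalComplex.isZero_single_obj_X _ _ _ _ hi)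

theorem rightAcyclicComplex_of_homComplex_single_exactAt {𝒳 : Set A} {C : CochainComplex A ℤ}
    (H : ∀ X ∈ 𝒳, ∀ n, (HomComplex ((singleFunctor A 0).obj X) C).ExactAt n) :
    RightAcyclicComplex 𝒳 C := by
  intro X hX n h hh
  obtain ⟨g, hg⟩ := (exactAt_iff n).1 (H X hX n) (Cochain.fromSingleMk h (zero_add n))
    (by rw [Cochain.δ_fromSingleMk _ _ _ _ (zero_add _), hh, Cochain.fromSingleMk_zero])
  obtain ⟨k, rfl⟩ := Cochain.fromSingleMk_surjective g (n - 1) (zero_add _)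
  rw [Cochain.δ_fromSingleMk _ _ _ n (zero_add n)] at hg
  exact ⟨k, by simpa using congrArg (Cochain.fromSingleEquiv (zero_add n)) hg⟩

theorem stmt2 (𝒳 : Set A) (h0 : ∀ Z : A, IsZero Z → Z ∈ 𝒳) (C : CochainComplex A ℤ) :
    RightAcyclicComplex 𝒳 C ↔
      ∀ X : CochainComplex A ℤ, MinusComplexIn 𝒳 X →
        ∀ n : ℤ, (CochainComplex.HomComplex X C).ExactAt n :=
  ⟨fun hC _ hX => hC.homComplex_exactAt hX, fun H =>
    rightAcyclicComplex_of_homComplex_single_exactAt fun _ hX =>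
      H _ (minusComplexIn_single h0 hX)⟩
end

section
/- Any right 𝒳-quasi-isomorphism between two bounded-above complexes with components in 𝒳 is a homotopy equivalence. -/
open CategoryTheory Limits

universe v u

variable {A : Type u} [Category.{v} A] [Abelian A]

/-!
The mapping cone of `f` has components `C^{n+1} ⊞ D^n`, which lie in `𝒳` up to biproducts, so its
right `𝒳`-acyclicity means that every cycle `u : cone^{n+1} ⟶ cone^{n+1}` factors through the
differential. Starting from a degree above which the bounded-above cone vanishes, one lifts
`𝟙 - d ≫ s_{n+1}` through `d` to obtain `s_n`, and by downward recursion this builds a contracting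
homotopy of the cone. A morphism with contractible cone is an isomorphism in the homotopy
category (the cone triangle is distinguished), hence a homotopy equivalence.
-/

namespace CochainComplex

variable {E : CochainComplex A ℤ}

def HomFromAcyclic (T : A) (E : CochainComplex A ℤ) : Prop :=
  ∀ (n : ℤ) (h : T ⟶ E.X (n + 1)), h ≫ E.d (n + 1) (n + 1 + 1) = 0 →
    ∃ l : T ⟶ E.X n, l ≫ E.d n (n + 1) = h

lemma homFromAcyclic_of_rightAcyclicComplex {𝒳 : Set A} (hE : RightAcyclicComplex 𝒳 E)
    {X : A} (hX : X ∈ 𝒳) : HomFromAcyclic X E := by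
  intro n h hh
  have := hE X hX (n + 1) h hh
  rwa [add_sub_cancel_right] at this

lemma HomFromAcyclic.of_iso {T T' : A} (hT : HomFromAcyclic T E) (e : T' ≅ T) :
    HomFromAcyclic T' E := by
  intro n h hh
  obtain ⟨l, hl⟩ := hT n (e.inv ≫ h) (by rw [Category.assoc, hh, comp_zero])
  exact ⟨e.hom ≫ l, by rw [Category.assoc, hl, e.hom_inv_id_assoc]⟩

lemma HomFromAcyclic.biprod {T T' : A} (hT : HomFromAcyclic T E) (hT' : HomFromAcyclic T' E) :
    HomFromAcyclic (T ⊞ T') E := by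
  intro n h hh
  obtain ⟨l, hl⟩ := hT n (biprod.inl ≫ h) (by rw [Category.assoc, hh, comp_zero])
  obtain ⟨l', hl'⟩ := hT' n (biprod.inr ≫ h) (by rw [Category.assoc, hh, comp_zero])
  exact ⟨biprod.desc l l', by ext <;> simp [hl, hl']⟩

/-- Built by downward recursion from the degree `b` above which `E` vanishes; `lift n u` stands
for a chosen preimage of `u` under `- ≫ E.d n (n + 1)`. -/
noncomputable def contractingHomotopyOfLift (b : ℤ)
    (lift : ∀ n : ℤ, (E.X (n + 1) ⟶ E.X (n + 1)) → (E.X (n + 1) ⟶ E.X n)) (n : ℤ) :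
    E.X (n + 1) ⟶ E.X n :=
  if b ≤ n then 0
  else lift n (𝟙 _ - E.d (n + 1) (n + 1 + 1) ≫ contractingHomotopyOfLift b lift (n + 1))
termination_by (b - n).toNat

lemma contractingHomotopyOfLift_comp_d_add_d_comp (b : ℤ) (hb : ∀ i, b < i → IsZero (E.X i))
    (lift : ∀ n : ℤ, (E.X (n + 1) ⟶ E.X (n + 1)) → (E.X (n + 1) ⟶ E.X n))
    (hlift : ∀ n u, u ≫ E.d (n + 1) (n + 1 + 1) = 0 → lift n u ≫ E.d n (n + 1) = u) (n : ℤ) :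
    contractingHomotopyOfLift b lift n ≫ E.d n (n + 1) +
      E.d (n + 1) (n + 1 + 1) ≫ contractingHomotopyOfLift b lift (n + 1) = 𝟙 _ := by
  by_cases hn : b ≤ n
  · exact (hb (n + 1) (by omega)).eq_of_src _ _
  have ih := eq_sub_of_add_eq (contractingHomotopyOfLift_comp_d_add_d_comp b hb lift hlift (n + 1))
  set s := contractingHomotopyOfLift b lift
  set u := 𝟙 _ - E.d (n + 1) (n + 1 + 1) ≫ s (n + 1)
  have hu : u ≫ E.d (n + 1) (n + 1 + 1) = 0 := by
    simp only [u, Preadditive.sub_comp, Category.id_comp, Category.assoc, ih, Preadditive.comp_sub,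
      Category.comp_id, HomologicalComplex.d_comp_d_assoc, zero_comp, sub_zero, sub_self]
  have hs : s n = lift n u := by
    simp only [s]
    rw [contractingHomotopyOfLift, if_neg hn]
  rw [hs, hlift n u hu]
  exact sub_add_cancel _ _
termination_by (b - n).toNat

lemma nonempty_homotopy_id_zero_of_homFromAcyclic (b : ℤ) (hb : ∀ i, b < i → IsZero (E.X i))
    (hE : ∀ n, HomFromAcyclic (E.X n) E) : Nonempty (Homotopy (𝟙 E) 0) := by
  have hE' : ∀ n (u : E.X (n + 1) ⟶ E.X (n + 1)), ∃ l : E.X (n + 1) ⟶ E.X n,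
      u ≫ E.d (n + 1) (n + 1 + 1) = 0 → l ≫ E.d n (n + 1) = u := by
    intro n u
    by_cases hu : u ≫ E.d (n + 1) (n + 1 + 1) = 0
    · exact (hE (n + 1) n u hu).imp fun _ hl _ => hl
    · exact ⟨0, fun h => absurd h hu⟩
  choose lift hlift using hE'
  let s := contractingHomotopyOfLift b lift
  refine ⟨{
    hom := fun i j => if h : i = j + 1 then eqToHom (congrArg E.X h) ≫ s j else 0
    zero := fun i j hij => dif_neg (by simp at hij; omega)
    comm := fun i => ?_ }⟩
  obtain ⟨n, rfl⟩ : ∃ n, i = n + 1 := ⟨i - 1, by omega⟩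
  rw [dNext_eq _ (show (ComplexShape.up ℤ).Rel (n + 1) (n + 1 + 1) from rfl),
    prevD_eq _ (show (ComplexShape.up ℤ).Rel n (n + 1) from rfl), dif_pos rfl, dif_pos rfl]
  simpa [add_comm] using (contractingHomotopyOfLift_comp_d_add_d_comp b hb lift hlift n).symm

lemma homFromAcyclic_mappingCone_X {C D : CochainComplex A ℤ} (f : C ⟶ D)
    (hC : ∀ n, HomFromAcyclic (C.X n) E) (hD : ∀ n, HomFromAcyclic (D.X n) E) (n : ℤ) :
    HomFromAcyclic ((mappingCone f).X n) E :=
  ((hC (n + 1)).biprod (hD n)).of_iso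
    (HomologicalComplex.homotopyCofiber.XIsoBiprod f n (n + 1) rfl)

lemma exists_homotopyEquiv_of_homotopy_id_zero_mappingCone {C D : CochainComplex A ℤ}
    (f : C ⟶ D) (h : Homotopy (𝟙 (mappingCone f)) 0) : ∃ e : HomotopyEquiv C D, e.hom = f := by
  have hzero : IsZero ((HomotopyCategory.quotient A (ComplexShape.up ℤ)).obj (mappingCone f)) :=
    (HomotopyCategory.isZero_quotient_obj_iff _).2 ⟨h⟩
  have hiso : IsIso ((HomotopyCategory.quotient A (ComplexShape.up ℤ)).map f) :=
    (Pretriangulated.Triangle.isZero₃_iff_isIso₁ _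
      (HomotopyCategory.mappingCone_triangleh_distinguished f)).1 hzero
  exact (HomotopyCategory.inverseImage_quotient_isomorphisms A _).le f hiso

end CochainComplex

open CochainComplex

theorem stmt4 (𝒳 : Set A) {C D : CochainComplex A ℤ} (hC : MinusComplexIn 𝒳 C)
    (hD : MinusComplexIn 𝒳 D) (f : C ⟶ D) (hf : RightQuasiIso 𝒳 f) :
    ∃ g : D ⟶ C, Nonempty (Homotopy (f ≫ g) (𝟙 C)) ∧ Nonempty (Homotopy (g ≫ f) (𝟙 D)) := by
  obtain ⟨⟨bC, hbC⟩, hC𝒳⟩ := hC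
  obtain ⟨⟨bD, hbD⟩, hD𝒳⟩ := hD
  have hcone : ∀ n, HomFromAcyclic ((mappingCone f).X n) (mappingCone f) :=
    homFromAcyclic_mappingCone_X f (fun n => homFromAcyclic_of_rightAcyclicComplex hf (hC𝒳 n))
      (fun n => homFromAcyclic_of_rightAcyclicComplex hf (hD𝒳 n))
  obtain ⟨h⟩ := nonempty_homotopy_id_zero_of_homFromAcyclic (max bC bD)
    (fun i hi => (mappingCone.isZero_X_iff f i).2 ⟨hbC _ (by omega), hbD _ (by omega)⟩) hcone
  obtain ⟨e, rfl⟩ := exists_homotopyEquiv_of_homotopy_id_zero_mappingCone f h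
  exact ⟨e.inv, ⟨e.homotopyHomInvId⟩, ⟨e.homotopyInvHomId⟩⟩
end

section
/- Let (𝒳, 𝒴) be a balanced pair in an abelian category 𝒜 and (𝒞, 𝒟) a cotorsion pair relative to (𝒳, 𝒴). Then both 𝒞 and 𝒟 are closed under ⁎-extensions: for any short exact sequence 0 → L → M → N → 0 which is both right 𝒳-acyclic and left 𝒴-acyclic, if L and N lie in 𝒞 (resp. 𝒟), then M lies in 𝒞 (resp. 𝒟). -/
open CategoryTheory Limits

universe v u

variable {A : Type u} [Category.{v} A] [Abelian A]

/-!
Both closure properties are the middle of a long exact `Ext⁎`-sequence in degree 1, checked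
by hand. In the second variable, `Hom(P, -)` for a proper `𝒳`-resolution `P` of `C` turns the
right `𝒳`-acyclic sequence `0 → L → M → N → 0` into an exact sequence of complexes, and a diagram
chase shows that `Ext⁎¹(C, L) = Ext⁎¹(C, N) = 0` forces `Ext⁎¹(C, M) = 0`.

In the first variable, the horseshoe construction glues proper resolutions of `L` and `N` into a
resolution of `M` with components `Lᵢ ⊞ Nᵢ` and triangular differentials, on which the vanishing
is again a chase. Comparison maps between two resolutions of `M`, with a homotopy from one
composite to the identity, transfer the vanishing to an arbitrary proper resolution; only the
terms in degrees `0, -1, -2` take part.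
-/

open Category Preadditive

def CoyonedaExactAt (Z : A) {U V W : A} (f : U ⟶ V) (g : V ⟶ W) : Prop :=
  ∀ h : Z ⟶ V, h ≫ g = 0 → ∃ k : Z ⟶ U, k ≫ f = h

def YonedaExactAt (D : A) {U V W : A} (f : U ⟶ V) (g : V ⟶ W) : Prop :=
  ∀ h : V ⟶ D, f ≫ h = 0 → ∃ k : W ⟶ D, g ≫ k = h

-- `𝒳` need not be closed under `⊞`, so the horseshoe resolution is only made of objects that
-- are projective for the sequences on which `Hom(𝒳, -)` is exact.
def IsRelProjective (𝒳 : Set A) (Z : A) : Prop :=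
  ∀ ⦃U V W : A⦄ (f : U ⟶ V) (g : V ⟶ W), (∀ X ∈ 𝒳, CoyonedaExactAt X f g) →
    CoyonedaExactAt Z f g

namespace IsRelProjective

variable {𝒳 : Set A}

lemma of_mem {X : A} (hX : X ∈ 𝒳) : IsRelProjective 𝒳 X :=
  fun _ _ _ _ _ h => h X hX

lemma exists_lift {Z V W : A} (hZ : IsRelProjective 𝒳 Z) (p : V ⟶ W)
    (hp : ∀ X ∈ 𝒳, ∀ h : X ⟶ W, ∃ k : X ⟶ V, k ≫ p = h) (h : Z ⟶ W) :
    ∃ k : Z ⟶ V, k ≫ p = h :=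
  hZ p (0 : W ⟶ W) (fun X hX h _ => hp X hX h) h comp_zero

lemma biprod {Z Z' : A} (hZ : IsRelProjective 𝒳 Z) (hZ' : IsRelProjective 𝒳 Z') :
    IsRelProjective 𝒳 (Z ⊞ Z') := by
  intro U V W f g hfg h hh
  obtain ⟨k, hk⟩ := hZ f g hfg (biprod.inl ≫ h) (by simp [hh])
  obtain ⟨k', hk'⟩ := hZ' f g hfg (biprod.inr ≫ h) (by simp [hh])
  exact ⟨biprod.desc k k', by ext <;> simp [hk, hk']⟩

end IsRelProjective

-- No exactness is asked at `Q₁`: `d₂` only determines which maps `Q₁ ⟶ D` are `Ext¹`-cocycles.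
structure IsTruncatedResolution (𝒳 : Set A) {M Q₀ Q₁ Q₂ : A} (ε : Q₀ ⟶ M) (d₁ : Q₁ ⟶ Q₀)
    (d₂ : Q₂ ⟶ Q₁) : Prop where
  relProjective₀ : IsRelProjective 𝒳 Q₀
  relProjective₁ : IsRelProjective 𝒳 Q₁
  relProjective₂ : IsRelProjective 𝒳 Q₂
  d₂_comp_d₁ : d₂ ≫ d₁ = 0
  d₁_comp_ε : d₁ ≫ ε = 0
  surjective : ∀ X ∈ 𝒳, ∀ h : X ⟶ M, ∃ k : X ⟶ Q₀, k ≫ ε = h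
  exact₀ : ∀ X ∈ 𝒳, CoyonedaExactAt X d₁ ε

namespace IsProperXResolution

variable {𝒳 : Set A} {M : A} {P : CochainComplex A ℤ} {ε : P.X 0 ⟶ M}

lemma isTruncatedResolution (hP : IsProperXResolution 𝒳 M P ε) :
    IsTruncatedResolution 𝒳 ε (P.d (-1) 0) (P.d (-2) (-1)) where
  relProjective₀ := .of_mem (hP.2.1 0 le_rfl)
  relProjective₁ := .of_mem (hP.2.1 (-1) (by norm_num))
  relProjective₂ := .of_mem (hP.2.1 (-2) (by norm_num))
  d₂_comp_d₁ := P.d_comp_d _ _ _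
  d₁_comp_ε := hP.2.2.1
  surjective X hX := (hP.2.2.2 X hX).1
  exact₀ X hX := (hP.2.2.2 X hX).2.1

lemma coyonedaExactAt_d (hP : IsProperXResolution 𝒳 M P ε) {X : A} (hX : X ∈ 𝒳) :
    CoyonedaExactAt X (P.d (-2) (-1)) (P.d (-1) 0) :=
  (hP.2.2.2 X hX).2.2 (-1) (by norm_num)

end IsProperXResolution

lemma extStarVanish_one_iff {𝒳 : Set A} {M D : A} :
    ExtStarVanish 𝒳 1 M D ↔ ∀ (P : CochainComplex A ℤ) (ε : P.X 0 ⟶ M),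
      IsProperXResolution 𝒳 M P ε → YonedaExactAt D (P.d (-2) (-1)) (P.d (-1) 0) :=
  Iff.rfl

-- `u : P → Q` and `v : Q → P` lift the identity of `M`; `s` is a homotopy from `u ≫ v` to `𝟙`.
lemma YonedaExactAt.of_isTruncatedResolution {𝒳 : Set A} {M D Q₀ Q₁ Q₂ P₀ P₁ P₂ : A}
    {εQ : Q₀ ⟶ M} {e₁ : Q₁ ⟶ Q₀} {e₂ : Q₂ ⟶ Q₁} {ε : P₀ ⟶ M} {d₁ : P₁ ⟶ P₀} {d₂ : P₂ ⟶ P₁}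
    (hD : YonedaExactAt D e₂ e₁) (hQ : IsTruncatedResolution 𝒳 εQ e₁ e₂)
    (hP : IsTruncatedResolution 𝒳 ε d₁ d₂) (hP₁ : ∀ X ∈ 𝒳, CoyonedaExactAt X d₂ d₁) :
    YonedaExactAt D d₂ d₁ := by
  intro h hh
  obtain ⟨u₀, hu₀⟩ := hP.relProjective₀.exists_lift εQ hQ.surjective ε
  obtain ⟨u₁, hu₁⟩ := hP.relProjective₁ _ _ hQ.exact₀ (d₁ ≫ u₀)
    (by rw [assoc, hu₀, hP.d₁_comp_ε])
  obtain ⟨v₀, hv₀⟩ := hQ.relProjective₀.exists_lift ε hP.surjective εQ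
  obtain ⟨v₁, hv₁⟩ := hQ.relProjective₁ _ _ hP.exact₀ (e₁ ≫ v₀)
    (by rw [assoc, hv₀, hQ.d₁_comp_ε])
  obtain ⟨v₂, hv₂⟩ := hQ.relProjective₂ _ _ hP₁ (e₂ ≫ v₁)
    (by rw [assoc, hv₁, ← assoc, hQ.d₂_comp_d₁, zero_comp])
  obtain ⟨s₀, hs₀⟩ := hP.relProjective₀ _ _ hP.exact₀ (u₀ ≫ v₀ - 𝟙 _)
    (by rw [sub_comp, assoc, hv₀, hu₀, id_comp, sub_self])
  obtain ⟨s₁, hs₁⟩ := hP.relProjective₁ _ _ hP₁ (u₁ ≫ v₁ - 𝟙 _ - d₁ ≫ s₀)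
    (by rw [sub_comp, sub_comp, assoc, hv₁, ← assoc, hu₁, assoc, assoc, hs₀]; simp)
  obtain ⟨k, hk⟩ := hD (v₁ ≫ h) (by rw [← assoc, ← hv₂, assoc, hh, comp_zero])
  refine ⟨u₀ ≫ k - s₀ ≫ h, ?_⟩
  calc d₁ ≫ (u₀ ≫ k - s₀ ≫ h) = (u₁ ≫ v₁ - d₁ ≫ s₀) ≫ h := by
        rw [comp_sub, ← assoc, ← hu₁, assoc, hk, sub_comp, assoc, assoc]
    _ = (s₁ ≫ d₂ + 𝟙 _) ≫ h := by rw [hs₁]; abel_nf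
    _ = h := by rw [add_comp, assoc, hh, comp_zero, zero_add, id_comp]

noncomputable def biprodTriangular {L₀ L₁ N₀ N₁ : A} (a : L₁ ⟶ L₀) (θ : N₁ ⟶ L₀) (b : N₁ ⟶ N₀) :
    L₁ ⊞ N₁ ⟶ L₀ ⊞ N₀ :=
  biprod.desc (a ≫ biprod.inl) (biprod.lift θ b)

lemma biprodTriangular_comp {L₀ L₁ L₂ N₀ N₁ N₂ : A} (a₁ : L₁ ⟶ L₀) (a₂ : L₂ ⟶ L₁)
    (θ₁ : N₁ ⟶ L₀) (θ₂ : N₂ ⟶ L₁) (b₁ : N₁ ⟶ N₀) (b₂ : N₂ ⟶ N₁) :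
    biprodTriangular a₂ θ₂ b₂ ≫ biprodTriangular a₁ θ₁ b₁ =
      biprodTriangular (a₂ ≫ a₁) (θ₂ ≫ a₁ + b₂ ≫ θ₁) (b₂ ≫ b₁) := by
  apply biprod.hom_ext' <;> simp [biprodTriangular]
  ext <;> simp

lemma yonedaExactAt_biprodTriangular {D L₀ L₁ L₂ N₀ N₁ N₂ : A} {a₁ : L₁ ⟶ L₀} {a₂ : L₂ ⟶ L₁}
    {θ₁ : N₁ ⟶ L₀} {θ₂ : N₂ ⟶ L₁} {b₁ : N₁ ⟶ N₀} {b₂ : N₂ ⟶ N₁} (hL : YonedaExactAt D a₂ a₁)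
    (hN : YonedaExactAt D b₂ b₁) (hθ : θ₂ ≫ a₁ + b₂ ≫ θ₁ = 0) :
    YonedaExactAt D (biprodTriangular a₂ θ₂ b₂) (biprodTriangular a₁ θ₁ b₁) := by
  intro h hh
  have hhL : a₂ ≫ biprod.inl ≫ h = 0 := by simpa [biprodTriangular] using biprod.inl ≫= hh
  have hhN : θ₂ ≫ biprod.inl ≫ h + b₂ ≫ biprod.inr ≫ h = 0 := by
    simpa [biprodTriangular, biprod.lift_eq] using biprod.inr ≫= hh
  obtain ⟨κ, hκ⟩ := hL _ hhL
  obtain ⟨μ, hμ⟩ := hN (biprod.inr ≫ h - θ₁ ≫ κ) (by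
    rw [comp_sub, ← assoc b₂ θ₁, eq_neg_of_add_eq_zero_right hθ, neg_comp, assoc, hκ,
      sub_neg_eq_add, add_comm, hhN])
  exact ⟨biprod.desc κ μ, by ext <;> simp [biprodTriangular, hκ, hμ]⟩

namespace SESRightAcyclic

variable {𝒳 : Set A} {S : ShortComplex A} {Z : A}

lemma coyonedaExactAt (hS : SESRightAcyclic 𝒳 S) (hZ : IsRelProjective 𝒳 Z) :
    CoyonedaExactAt Z S.f S.g :=
  hZ _ _ fun X hX => (hS X hX).2.1

lemma exists_lift (hS : SESRightAcyclic 𝒳 S) (hZ : IsRelProjective 𝒳 Z) (h : Z ⟶ S.X₃) :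
    ∃ k : Z ⟶ S.X₂, k ≫ S.g = h :=
  hZ.exists_lift _ (fun X hX => (hS X hX).2.2) h

end SESRightAcyclic

lemma IsTruncatedResolution.biprod {𝒳 : Set A} {S : ShortComplex A} [Mono S.f]
    (hS : SESRightAcyclic 𝒳 S) {L₀ L₁ L₂ N₀ N₁ N₂ : A} {εL : L₀ ⟶ S.X₁} {a₁ : L₁ ⟶ L₀}
    {a₂ : L₂ ⟶ L₁} {εN : N₀ ⟶ S.X₃} {b₁ : N₁ ⟶ N₀} {b₂ : N₂ ⟶ N₁}
    (hL : IsTruncatedResolution 𝒳 εL a₁ a₂) (hN : IsTruncatedResolution 𝒳 εN b₁ b₂)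
    {τ : N₀ ⟶ S.X₂} {θ₁ : N₁ ⟶ L₀} {θ₂ : N₂ ⟶ L₁} (hτ : τ ≫ S.g = εN)
    (hθ₁ : θ₁ ≫ εL ≫ S.f + b₁ ≫ τ = 0) (hθ₂ : θ₂ ≫ a₁ + b₂ ≫ θ₁ = 0) :
    IsTruncatedResolution 𝒳 (biprod.desc (εL ≫ S.f) τ) (biprodTriangular a₁ θ₁ b₁)
      (biprodTriangular a₂ θ₂ b₂) where
  relProjective₀ := hL.relProjective₀.biprod hN.relProjective₀
  relProjective₁ := hL.relProjective₁.biprod hN.relProjective₁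
  relProjective₂ := hL.relProjective₂.biprod hN.relProjective₂
  d₂_comp_d₁ := by
    rw [biprodTriangular_comp, hL.d₂_comp_d₁, hθ₂, hN.d₂_comp_d₁]
    ext <;> simp [biprodTriangular]
  d₁_comp_ε := by
    ext <;> simp [biprodTriangular, reassoc_of% hL.d₁_comp_ε, hθ₁]
  surjective X hX h := by
    obtain ⟨kN, hkN⟩ := hN.surjective X hX (h ≫ S.g)
    obtain ⟨l, hl⟩ := hS X hX |>.2.1 (h - kN ≫ τ) (by rw [sub_comp, assoc, hτ, hkN, sub_self])
    obtain ⟨kL, hkL⟩ := hL.surjective X hX l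
    exact ⟨biprod.lift kL kN, by simp [← assoc, hkL, hl]⟩
  exact₀ X hX h hh := by
    have hh' : (h ≫ biprod.fst) ≫ εL ≫ S.f + (h ≫ biprod.snd) ≫ τ = 0 := by
      simpa [biprod.desc_eq] using hh
    obtain ⟨kN, hkN⟩ := hN.exact₀ X hX (h ≫ biprod.snd) (by
      rw [← hτ, ← assoc, eq_neg_of_add_eq_zero_right hh']
      simp)
    obtain ⟨kL, hkL⟩ := hL.exact₀ X hX (h ≫ biprod.fst - kN ≫ θ₁) (by
      rw [← cancel_mono S.f, zero_comp, ← hh', ← hkN]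
      simp [sub_comp, eq_neg_of_add_eq_zero_left hθ₁])
    exact ⟨biprod.lift kL kN, by ext <;> simp [biprodTriangular, hkL, hkN]⟩

lemma IsTruncatedResolution.exists_horseshoe {𝒳 : Set A} {S : ShortComplex A} [Mono S.f]
    {L₀ L₁ L₂ N₀ N₁ N₂ : A} {εL : L₀ ⟶ S.X₁} {a₁ : L₁ ⟶ L₀} {a₂ : L₂ ⟶ L₁} {εN : N₀ ⟶ S.X₃}
    {b₁ : N₁ ⟶ N₀} {b₂ : N₂ ⟶ N₁} (hL : IsTruncatedResolution 𝒳 εL a₁ a₂)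
    (hS : SESRightAcyclic 𝒳 S) (hN : IsTruncatedResolution 𝒳 εN b₁ b₂) :
    ∃ (τ : N₀ ⟶ S.X₂) (θ₁ : N₁ ⟶ L₀) (θ₂ : N₂ ⟶ L₁), θ₂ ≫ a₁ + b₂ ≫ θ₁ = 0 ∧
      IsTruncatedResolution 𝒳 (biprod.desc (εL ≫ S.f) τ) (biprodTriangular a₁ θ₁ b₁)
        (biprodTriangular a₂ θ₂ b₂) := by
  obtain ⟨τ, hτ⟩ := hS.exists_lift hN.relProjective₀ εN
  obtain ⟨l, hl⟩ := hS.coyonedaExactAt hN.relProjective₁ (-(b₁ ≫ τ))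
    (by rw [neg_comp, assoc, hτ, hN.d₁_comp_ε, neg_zero])
  obtain ⟨θ₁, hθ₁⟩ := hN.relProjective₁.exists_lift εL hL.surjective l
  obtain ⟨θ₂, hθ₂⟩ := hN.relProjective₂ _ _ hL.exact₀ (-(b₂ ≫ θ₁)) (by
    rw [← cancel_mono S.f, zero_comp, assoc, neg_comp, assoc, reassoc_of% hθ₁, hl, comp_neg,
      ← assoc, hN.d₂_comp_d₁, zero_comp, neg_neg])
  have hθ : θ₂ ≫ a₁ + b₂ ≫ θ₁ = 0 := by rw [hθ₂, neg_add_cancel]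
  exact ⟨τ, θ₁, θ₂, hθ, hL.biprod hS hN hτ (by rw [reassoc_of% hθ₁, hl, neg_add_cancel]) hθ⟩

namespace SESRightAcyclic

variable {𝒳 : Set A} {S : ShortComplex A} [Mono S.f]

lemma yonedaExactAt_X₂ (hS : SESRightAcyclic 𝒳 S) {Q₀ Q₁ Q₂ : A} {d₁ : Q₁ ⟶ Q₀}
    {d₂ : Q₂ ⟶ Q₁} (hQ₀ : IsRelProjective 𝒳 Q₀) (hQ₁ : IsRelProjective 𝒳 Q₁)
    (hd : d₂ ≫ d₁ = 0) (h₁ : YonedaExactAt S.X₁ d₂ d₁) (h₃ : YonedaExactAt S.X₃ d₂ d₁) :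
    YonedaExactAt S.X₂ d₂ d₁ := by
  intro h hh
  obtain ⟨k₃, hk₃⟩ := h₃ (h ≫ S.g) (by rw [← assoc, hh, zero_comp])
  obtain ⟨m, hm⟩ := hS.exists_lift hQ₀ k₃
  obtain ⟨l, hl⟩ := hS.coyonedaExactAt hQ₁ (h - d₁ ≫ m)
    (by rw [sub_comp, assoc, hm, hk₃, sub_self])
  obtain ⟨k₁, hk₁⟩ := h₁ l (by
    rw [← cancel_mono S.f, zero_comp, assoc, hl, comp_sub, hh, ← assoc, hd, zero_comp, sub_zero])
  exact ⟨k₁ ≫ S.f + m, by rw [comp_add, ← assoc, hk₁, hl, sub_add_cancel]⟩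

lemma extStarVanish_one_snd (hS : SESRightAcyclic 𝒳 S) {C : A}
    (h₁ : ExtStarVanish 𝒳 1 C S.X₁) (h₃ : ExtStarVanish 𝒳 1 C S.X₃) :
    ExtStarVanish 𝒳 1 C S.X₂ := by
  rw [extStarVanish_one_iff] at h₁ h₃ ⊢
  intro P ε hP
  have hQ := hP.isTruncatedResolution
  exact hS.yonedaExactAt_X₂ hQ.relProjective₀ hQ.relProjective₁ hQ.d₂_comp_d₁ (h₁ P ε hP)
    (h₃ P ε hP)

lemma extStarVanish_one_fst (hS : SESRightAcyclic 𝒳 S)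
    (hres : ∀ M : A, ∃ (P : CochainComplex A ℤ) (ε : P.X 0 ⟶ M), IsProperXResolution 𝒳 M P ε)
    {D : A} (h₁ : ExtStarVanish 𝒳 1 S.X₁ D) (h₃ : ExtStarVanish 𝒳 1 S.X₃ D) :
    ExtStarVanish 𝒳 1 S.X₂ D := by
  rw [extStarVanish_one_iff] at h₁ h₃ ⊢
  intro P ε hP
  obtain ⟨PL, εL, hPL⟩ := hres S.X₁
  obtain ⟨PN, εN, hPN⟩ := hres S.X₃
  obtain ⟨τ, θ₁, θ₂, hθ, hQ⟩ :=
    hPL.isTruncatedResolution.exists_horseshoe hS hPN.isTruncatedResolution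
  exact (yonedaExactAt_biprodTriangular (h₁ PL εL hPL) (h₃ PN εN hPN) hθ
    ).of_isTruncatedResolution hQ hP.isTruncatedResolution fun X hX => hP.coyonedaExactAt_d hX

end SESRightAcyclic

theorem stmt6 (𝒳 𝒴 𝒞 𝒟 : Set A) (hbp : IsBalancedPair 𝒳 𝒴)
    (hcp : IsRelCotorsionPair 𝒳 𝒞 𝒟) :
    (∀ S : ShortComplex A, SESStarAcyclic 𝒳 𝒴 S → S.X₁ ∈ 𝒞 → S.X₃ ∈ 𝒞 → S.X₂ ∈ 𝒞) ∧
    (∀ S : ShortComplex A, SESStarAcyclic 𝒳 𝒴 S → S.X₁ ∈ 𝒟 → S.X₃ ∈ 𝒟 → S.X₂ ∈ 𝒟) := by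
  have hres (M : A) : ∃ (P : CochainComplex A ℤ) (ε : P.X 0 ⟶ M), IsProperXResolution 𝒳 M P ε :=
    let ⟨P, ε, hP, _⟩ := hbp.2.2.1 M
    ⟨P, ε, hP⟩
  refine ⟨fun S ⟨hSE, hS, _⟩ h₁ h₃ => ?_, fun S ⟨hSE, hS, _⟩ h₁ h₃ => ?_⟩ <;> have := hSE.mono_f
  · exact (hcp.1 _).2 fun D hD =>
      hS.extStarVanish_one_fst hres ((hcp.1 _).1 h₁ D hD) ((hcp.1 _).1 h₃ D hD)
  · exact (hcp.2 _).2 fun C hC =>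
      hS.extStarVanish_one_snd ((hcp.2 _).1 h₁ C hC) ((hcp.2 _).1 h₃ C hC)
end

section
/- Let (𝒳, 𝒴) be a balanced pair in an abelian category 𝒜. Then 𝒳 is admissible (every right 𝒳-approximation is an epimorphism) if and only if 𝒴 is coadmissible (every left 𝒴-approximation is a monomorphism). -/
open CategoryTheory Limits

universe v u

variable {A : Type u} [Category.{v} A] [Abelian A]

/-! If `𝒳` is admissible, a morphism `η : N ⟶ Z` that kills no nonzero morphism from an
object of `𝒳` is a monomorphism: a morphism `g` with `g ≫ η = 0` is covered by an epic
right `𝒳`-approximation `p`, and `p ≫ g` is killed by `η`, hence zero. This applies to the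
coaugmentation of a right `𝒳`-acyclic `𝒴`-coresolution of `M`, which factors through every
left `𝒴`-approximation of `M`; so those are monomorphisms. The converse is dual. -/

lemma mono_of_xAdmissible {𝒳 : Set A} (hfin : ∀ M : A, ∃ (X : A) (f : X ⟶ M), IsRightApprox 𝒳 f)
    (hadm : XAdmissible 𝒳) {N Z : A} (η : N ⟶ Z)
    (hη : ∀ X ∈ 𝒳, ∀ h : X ⟶ N, h ≫ η = 0 → h = 0) : Mono η := by
  refine Preadditive.mono_of_cancel_zero _ fun {T} g hg => ?_
  obtain ⟨X, p, hp⟩ := hfin T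
  have := hadm _ _ p hp
  rw [← cancel_epi p, comp_zero]
  exact hη X hp.1 _ (by rw [Category.assoc, hg, comp_zero])

lemma epi_of_yCoadmissible {𝒴 : Set A} (hfin : ∀ M : A, ∃ (Y : A) (f : M ⟶ Y), IsLeftApprox 𝒴 f)
    (hcoadm : YCoadmissible 𝒴) {Z M : A} (ε : Z ⟶ M)
    (hε : ∀ Y ∈ 𝒴, ∀ h : M ⟶ Y, ε ≫ h = 0 → h = 0) : Epi ε := by
  refine Preadditive.epi_of_cancel_zero _ fun {T} g hg => ?_
  obtain ⟨Y, j, hj⟩ := hfin T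
  have := hcoadm _ _ j hj
  rw [← cancel_mono j, zero_comp]
  exact hε Y hj.1 _ (by rw [← Category.assoc, hg, zero_comp])

omit [Abelian A] in
lemma IsLeftApprox.mono {𝒴 : Set A} {M Y Y' : A} {f : M ⟶ Y} (hf : IsLeftApprox 𝒴 f)
    (hY' : Y' ∈ 𝒴) (η : M ⟶ Y') [Mono η] : Mono f := by
  obtain ⟨h, hh⟩ := hf.2 Y' hY' η
  exact mono_of_mono_fac hh

omit [Abelian A] in
lemma IsRightApprox.epi {𝒳 : Set A} {X X' M : A} {f : X ⟶ M} (hf : IsRightApprox 𝒳 f)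
    (hX' : X' ∈ 𝒳) (ε : X' ⟶ M) [Epi ε] : Epi f := by
  obtain ⟨h, hh⟩ := hf.2 X' hX' ε
  exact epi_of_epi_fac hh

theorem stmt8 (𝒳 𝒴 : Set A) (hbp : IsBalancedPair 𝒳 𝒴) :
    XAdmissible 𝒳 ↔ YCoadmissible 𝒴 := by
  obtain ⟨hXfin, hYfin, hres, hcores⟩ := hbp
  constructor
  · intro hadm M Y f hf
    obtain ⟨Q, η, hQ, hQac⟩ := hcores M
    have := mono_of_xAdmissible hXfin hadm η fun X hX => (hQac X hX).1
    exact hf.mono (hQ.2.1 0 le_rfl) η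
  · intro hcoadm X M f hf
    obtain ⟨P, ε, hP, hPac⟩ := hres M
    have := epi_of_yCoadmissible hYfin hcoadm ε fun Y hY => (hPac Y hY).1
    exact hf.epi (hP.2.1 0 le_rfl) ε
end

section
/- Let (𝒳, 𝒴) be an admissible balanced pair in an abelian category 𝒜 and ℰ a subcategory closed under ⁎-extensions. If φ : E → M is a minimal right ℰ-approximation, then the kernel K of φ satisfies Ext⁎¹(E', K) = 0 for every E' ∈ ℰ (relative Wakamatsu lemma). -/
open CategoryTheory Limits

universe v u

variable {A : Type u} [Category.{v} A] [Abelian A]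

/-- closed under `⁎`-extensions -/
def ClosedUnderStarExt (𝒳 𝒴 ℰ : Set A) : Prop :=
  ∀ S : ShortComplex A, SESStarAcyclic 𝒳 𝒴 S → S.X₁ ∈ ℰ → S.X₃ ∈ ℰ → S.X₂ ∈ ℰ

/-!
Write `K = ker φ` and let `h : P⁻¹ ⟶ K` be a cocycle on a proper `𝒳`-resolution `P` of `E' ∈ ℰ`.
It factors through the syzygy `Ω = coker (P⁻² ⟶ P⁻¹) ↪ P⁰`, and pushing the extension
`0 → Ω → P⁰ → E' → 0` out along `Ω ⟶ K ⟶ E` gives an extension `0 → E → H → E' → 0`, which is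
`⁎`-acyclic because `P` is. Hence `H ∈ ℰ`, `φ` extends to `H`, and minimality of `φ` makes `E ⟶ H`
split; the splitting, restricted to `P⁰`, lands in `K` and is the required coboundary.
Left `𝒴`-acyclicity of `P` in degree `-1`, needed for the `⁎`-acyclicity, holds for the resolution
supplied by the balanced pair and transfers to `P` through the comparison maps.
-/

open Category

/-- `H¹ Hom(P, N) = 0`; for a proper `𝒳`-resolution `P` of `M` this is `Ext⁎¹(M, N) = 0`. -/
def HomH1Vanishes (P : CochainComplex A ℤ) (N : A) : Prop :=
  ∀ h : P.X (-1) ⟶ N, P.d (-2) (-1) ≫ h = 0 → ∃ k : P.X 0 ⟶ N, P.d (-1) 0 ≫ k = h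

lemma CategoryTheory.ShortComplex.exact_of_lifts_from_approx {𝒳 : Set A}
    (happ : ∀ M : A, ∃ (X : A) (f : X ⟶ M), IsRightApprox 𝒳 f) (hadm : XAdmissible 𝒳)
    (S : ShortComplex A)
    (hlift : ∀ X ∈ 𝒳, ∀ h : X ⟶ S.X₂, h ≫ S.g = 0 → ∃ k : X ⟶ S.X₁, k ≫ S.f = h) :
    S.Exact := by
  rw [ShortComplex.exact_iff_exact_up_to_refinements]
  intro T x hx
  obtain ⟨X, ρ, hρ⟩ := happ T
  have := hadm _ _ ρ hρ
  obtain ⟨k, hk⟩ := hlift X hρ.1 (ρ ≫ x) (by rw [assoc, hx, comp_zero])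
  exact ⟨X, ρ, inferInstance, k, hk.symm⟩

lemma SESRightAcyclic.of_shortExact {𝒳 : Set A} {S : ShortComplex A} (hS : S.ShortExact)
    (hlift : ∀ X ∈ 𝒳, ∀ g : X ⟶ S.X₃, ∃ k : X ⟶ S.X₂, k ≫ S.g = g) :
    SESRightAcyclic 𝒳 S := by
  have := hS.mono_f
  refine fun X hX => ⟨fun a b hab => (cancel_mono S.f).1 hab, fun x hx => ?_, hlift X hX⟩
  obtain ⟨l, hl⟩ := KernelFork.IsLimit.lift' hS.exact.fIsKernel x hx
  exact ⟨l, hl⟩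

lemma SESLeftAcyclic.of_shortExact {𝒴 : Set A} {S : ShortComplex A} (hS : S.ShortExact)
    (hext : ∀ Y ∈ 𝒴, ∀ g : S.X₁ ⟶ Y, ∃ k : S.X₂ ⟶ Y, S.f ≫ k = g) :
    SESLeftAcyclic 𝒴 S := by
  have := hS.epi_g
  refine fun Y hY => ⟨fun a b hab => (cancel_epi S.g).1 hab, fun x hx => ?_, hext Y hY⟩
  obtain ⟨l, hl⟩ := CokernelCofork.IsColimit.desc' hS.exact.gIsCokernel x hx
  exact ⟨l, hl⟩

section PushoutExtension

variable {K B Z Q : A} (f : K ⟶ B) (g : K ⟶ Z) (c : Z ⟶ Q) (w : g ≫ c = 0)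

/-- `B ⟶ B ⊔_K Z ⟶ Q`: the pushout of the extension `K ⟶ Z ⟶ Q` along `f`. -/
noncomputable abbrev pushoutExtension : ShortComplex A :=
  ShortComplex.mk (pushout.inl f g) (pushout.desc 0 c (by rw [comp_zero, w]))
    (pushout.inl_desc _ _ _)

lemma pushoutExtension_inr_g : pushout.inr f g ≫ (pushoutExtension f g c w).g = c :=
  pushout.inr_desc _ _ _

lemma pushoutExtension_shortExact [Mono g] (hc : IsColimit (CokernelCofork.ofπ c w)) :
    (pushoutExtension f g c w).ShortExact := by
  have : Epi c := epi_of_isColimit_cofork hc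
  have : Epi (pushoutExtension f g c w).g := epi_of_epi_fac (pushoutExtension_inr_g f g c w)
  have : Mono (pushoutExtension f g c w).f := inferInstanceAs (Mono (pushout.inl f g))
  refine ⟨ShortComplex.exact_of_g_is_cokernel _ (CokernelCofork.IsColimit.ofπ' _ _ ?_)⟩
  intro W k hk
  have hgk : g ≫ pushout.inr f g ≫ k = 0 := by
    rw [← assoc, ← pushout.condition, assoc, show pushout.inl f g ≫ k = 0 from hk, comp_zero]
  obtain ⟨d, hd⟩ := CokernelCofork.IsColimit.desc' hc _ hgk
  refine ⟨d, pushout.hom_ext ?_ ?_⟩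
  · rw [← assoc, pushout.inl_desc, zero_comp]
    exact hk.symm
  · rw [← assoc, pushoutExtension_inr_g]
    exact hd

end PushoutExtension

lemma IsMinimalRightApprox.exists_retraction {C : Type*} [Category C] {ℰ : Set C} {E M H : C}
    {φ : E ⟶ M}
    (hmin : IsMinimalRightApprox ℰ φ) (hH : H ∈ ℰ) (j : E ⟶ H) (ψ : H ⟶ M)
    (hjψ : j ≫ ψ = φ) : ∃ r : H ⟶ E, j ≫ r = 𝟙 E ∧ r ≫ φ = ψ := by
  obtain ⟨θ, hθ⟩ := hmin.1.2 H hH ψ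
  have hs : (j ≫ θ) ≫ φ = φ := by rw [assoc, hθ, hjψ]
  have := hmin.2 _ hs
  have hinv : inv (j ≫ θ) ≫ φ = φ := (IsIso.inv_comp_eq _).2 hs.symm
  exact ⟨θ ≫ inv (j ≫ θ), by rw [← assoc, IsIso.hom_inv_id], by rw [assoc, hinv, hθ]⟩

namespace IsProperXResolution

variable {𝒳 : Set A} {M : A} {P : CochainComplex A ℤ} {ε : P.X 0 ⟶ M}

lemma exists_lift_augmentation (hP : IsProperXResolution 𝒳 M P ε) {X : A} (hX : X ∈ 𝒳)
    (f : X ⟶ M) : ∃ k : X ⟶ P.X 0, k ≫ ε = f :=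
  (hP.2.2.2 X hX).1 f

lemma exists_lift_d_neg_one (hP : IsProperXResolution 𝒳 M P ε) {X : A} (hX : X ∈ 𝒳)
    (f : X ⟶ P.X 0) (hf : f ≫ ε = 0) : ∃ k : X ⟶ P.X (-1), k ≫ P.d (-1) 0 = f :=
  (hP.2.2.2 X hX).2.1 f hf

lemma exists_lift_d_neg_two (hP : IsProperXResolution 𝒳 M P ε) {X : A} (hX : X ∈ 𝒳)
    (f : X ⟶ P.X (-1)) (hf : f ≫ P.d (-1) 0 = 0) : ∃ k : X ⟶ P.X (-2), k ≫ P.d (-2) (-1) = f :=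
  (hP.2.2.2 X hX).2.2 (-1) (by norm_num) f hf

lemma mem (hP : IsProperXResolution 𝒳 M P ε) {i : ℤ} (hi : i ≤ 0) : P.X i ∈ 𝒳 :=
  hP.2.1 i hi

lemma exists_comparison {P' : CochainComplex A ℤ} {ε' : P'.X 0 ⟶ M}
    (hP : IsProperXResolution 𝒳 M P ε) (hP' : IsProperXResolution 𝒳 M P' ε') :
    ∃ (u₀ : P'.X 0 ⟶ P.X 0) (u₁ : P'.X (-1) ⟶ P.X (-1)) (u₂ : P'.X (-2) ⟶ P.X (-2)),
      u₀ ≫ ε = ε' ∧ u₁ ≫ P.d (-1) 0 = P'.d (-1) 0 ≫ u₀ ∧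
        u₂ ≫ P.d (-2) (-1) = P'.d (-2) (-1) ≫ u₁ := by
  obtain ⟨u₀, hu₀⟩ := hP.exists_lift_augmentation (hP'.mem le_rfl) ε'
  obtain ⟨u₁, hu₁⟩ := hP.exists_lift_d_neg_one (hP'.mem (by norm_num)) (P'.d (-1) 0 ≫ u₀)
    (by rw [assoc, hu₀]; exact hP'.2.2.1)
  obtain ⟨u₂, hu₂⟩ := hP.exists_lift_d_neg_two (hP'.mem (by norm_num)) (P'.d (-2) (-1) ≫ u₁)
    (by rw [assoc, hu₁, ← assoc, P'.d_comp_d, zero_comp])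
  exact ⟨u₀, u₁, u₂, hu₀, hu₁, hu₂⟩

lemma exists_homotopy_id (hP : IsProperXResolution 𝒳 M P ε) (f₀ : P.X 0 ⟶ P.X 0)
    (f₁ : P.X (-1) ⟶ P.X (-1)) (h₀ : f₀ ≫ ε = ε) (h₁ : f₁ ≫ P.d (-1) 0 = P.d (-1) 0 ≫ f₀) :
    ∃ (s₀ : P.X 0 ⟶ P.X (-1)) (s₁ : P.X (-1) ⟶ P.X (-2)),
      f₁ = 𝟙 _ + s₁ ≫ P.d (-2) (-1) + P.d (-1) 0 ≫ s₀ := by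
  obtain ⟨s₀, hs₀⟩ := hP.exists_lift_d_neg_one (hP.mem le_rfl) (f₀ - 𝟙 _)
    (by rw [Preadditive.sub_comp, h₀, id_comp, sub_self])
  obtain ⟨s₁, hs₁⟩ := hP.exists_lift_d_neg_two (hP.mem (by norm_num))
    (f₁ - 𝟙 _ - P.d (-1) 0 ≫ s₀)
    (by
      simp only [Preadditive.sub_comp, assoc, hs₀, h₁, Preadditive.comp_sub, id_comp, comp_id]
      abel)
  exact ⟨s₀, s₁, by rw [hs₁]; abel⟩

lemma homH1Vanishes_of_homH1Vanishes {P' : CochainComplex A ℤ} {ε' : P'.X 0 ⟶ M}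
    (hP : IsProperXResolution 𝒳 M P ε) (hP' : IsProperXResolution 𝒳 M P' ε') {N : A}
    (hN : HomH1Vanishes P' N) : HomH1Vanishes P N := by
  intro h hh
  obtain ⟨u₀, u₁, u₂, hu₀, hu₁, hu₂⟩ := hP.exists_comparison hP'
  obtain ⟨v₀, v₁, -, hv₀, hv₁, -⟩ := hP'.exists_comparison hP
  obtain ⟨s₀, s₁, hs⟩ := hP.exists_homotopy_id (v₀ ≫ u₀) (v₁ ≫ u₁)
    (by rw [assoc, hu₀, hv₀]) (by rw [assoc, hu₁, ← assoc, hv₁, assoc])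
  obtain ⟨k', hk'⟩ := hN (u₁ ≫ h) (by rw [← assoc, ← hu₂, assoc, hh, comp_zero])
  refine ⟨v₀ ≫ k' - s₀ ≫ h, ?_⟩
  rw [Preadditive.comp_sub, ← assoc, ← hv₁, assoc, hk', ← assoc, hs]
  simp only [Preadditive.add_comp, id_comp, assoc, hh, comp_zero, add_zero, add_sub_cancel_right]

end IsProperXResolution

lemma AugResLeftAcyclic.homH1Vanishes {𝒴 : Set A} {M : A} {P : CochainComplex A ℤ}
    {ε : P.X 0 ⟶ M} (hP : AugResLeftAcyclic 𝒴 M P ε) {Y : A} (hY : Y ∈ 𝒴) :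
    HomH1Vanishes P Y :=
  (hP Y hY).2.2 (-1) (by norm_num)

/-- Its `opcycles` is the syzygy `Ω = coker (P⁻² ⟶ P⁻¹)`, which `fromOpcycles` embeds in `P⁰`
when the complex is exact. -/
noncomputable abbrev syzygyComplex (P : CochainComplex A ℤ) : ShortComplex A :=
  ShortComplex.mk (P.d (-2) (-1)) (P.d (-1) 0) (P.d_comp_d _ _ _)

lemma syzygyComplex_p_fromOpcycles (P : CochainComplex A ℤ) :
    (syzygyComplex P).pOpcycles ≫ (syzygyComplex P).fromOpcycles = P.d (-1) 0 :=
  (syzygyComplex P).p_fromOpcycles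

namespace IsProperXResolution

variable {𝒳 : Set A} {M : A} {P : CochainComplex A ℤ} {ε : P.X 0 ⟶ M}

lemma epi_augmentation (happ : ∀ M : A, ∃ (X : A) (f : X ⟶ M), IsRightApprox 𝒳 f)
    (hadm : XAdmissible 𝒳) (hP : IsProperXResolution 𝒳 M P ε) : Epi ε := by
  obtain ⟨X, ρ, hρ⟩ := happ M
  have := hadm _ _ ρ hρ
  obtain ⟨k, hk⟩ := hP.exists_lift_augmentation hρ.1 ρ
  exact epi_of_epi_fac hk

lemma exact_syzygyComplex (happ : ∀ M : A, ∃ (X : A) (f : X ⟶ M), IsRightApprox 𝒳 f)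
    (hadm : XAdmissible 𝒳) (hP : IsProperXResolution 𝒳 M P ε) : (syzygyComplex P).Exact :=
  (syzygyComplex P).exact_of_lifts_from_approx happ hadm fun _ hX => hP.exists_lift_d_neg_two hX

lemma fromOpcycles_comp_augmentation (hP : IsProperXResolution 𝒳 M P ε) :
    (syzygyComplex P).fromOpcycles ≫ ε = 0 := by
  rw [← cancel_epi (syzygyComplex P).pOpcycles, reassoc_of% syzygyComplex_p_fromOpcycles,
    comp_zero]
  exact hP.2.2.1

noncomputable def isColimitSyzygy (happ : ∀ M : A, ∃ (X : A) (f : X ⟶ M), IsRightApprox 𝒳 f)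
    (hadm : XAdmissible 𝒳) (hP : IsProperXResolution 𝒳 M P ε) :
    IsColimit (CokernelCofork.ofπ ε hP.fromOpcycles_comp_augmentation) := by
  have := epi_augmentation happ hadm hP
  refine ((ShortComplex.mk _ _ hP.fromOpcycles_comp_augmentation).exact_of_lifts_from_approx
    happ hadm fun X hX f hf => ?_).gIsCokernel
  obtain ⟨k, hk⟩ := hP.exists_lift_d_neg_one hX f hf
  exact ⟨k ≫ (syzygyComplex P).pOpcycles, by rw [assoc, syzygyComplex_p_fromOpcycles, hk]⟩

lemma homH1Vanishes_kernel (happ : ∀ M : A, ∃ (X : A) (f : X ⟶ M), IsRightApprox 𝒳 f)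
    (hadm : XAdmissible 𝒳) {𝒴 ℰ : Set A} (hext : ClosedUnderStarExt 𝒳 𝒴 ℰ) {E N : A}
    {φ : E ⟶ N} (hmin : IsMinimalRightApprox ℰ φ) (hM : M ∈ ℰ)
    (hP : IsProperXResolution 𝒳 M P ε) (hPY : ∀ Y ∈ 𝒴, HomH1Vanishes P Y) :
    HomH1Vanishes P (kernel φ) := by
  intro h hh
  let S := syzygyComplex P
  have := (exact_syzygyComplex happ hadm hP).mono_fromOpcycles
  let h' := S.descOpcycles h hh
  let T := pushoutExtension (h' ≫ kernel.ι φ) S.fromOpcycles ε hP.fromOpcycles_comp_augmentation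
  have hT : T.ShortExact := pushoutExtension_shortExact _ _ _ _ (isColimitSyzygy happ hadm hP)
  have hTright : SESRightAcyclic 𝒳 T := SESRightAcyclic.of_shortExact hT fun X hX g => by
    obtain ⟨k, hk⟩ := hP.exists_lift_augmentation hX g
    exact ⟨k ≫ pushout.inr _ _, by rw [assoc, pushoutExtension_inr_g, hk]⟩
  have hTleft : SESLeftAcyclic 𝒴 T := SESLeftAcyclic.of_shortExact hT fun Y hY g => by
    obtain ⟨w, hw⟩ := hPY Y hY (S.pOpcycles ≫ h' ≫ kernel.ι φ ≫ g)
      (by rw [← assoc, S.f_pOpcycles, zero_comp])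
    refine ⟨pushout.desc g w ?_, pushout.inl_desc _ _ _⟩
    rw [← cancel_epi S.pOpcycles, reassoc_of% syzygyComplex_p_fromOpcycles, assoc]
    exact hw.symm
  obtain ⟨r, hjr, hrφ⟩ := hmin.exists_retraction (hext T ⟨hT, hTright, hTleft⟩ hmin.1.1 hM)
    (pushout.inl _ _) (pushout.desc φ 0 (by rw [assoc, kernel.condition, comp_zero, comp_zero]))
    (pushout.inl_desc _ _ _)
  refine ⟨kernel.lift φ (pushout.inr _ _ ≫ r) (by rw [assoc, hrφ, pushout.inr_desc]), ?_⟩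
  rw [← cancel_mono (kernel.ι φ), assoc, kernel.lift_ι]
  calc P.d (-1) 0 ≫ pushout.inr _ _ ≫ r
      = S.pOpcycles ≫ (h' ≫ kernel.ι φ) ≫ pushout.inl _ _ ≫ r := by
        rw [← syzygyComplex_p_fromOpcycles, assoc, pushout.condition_assoc]
    _ = h ≫ kernel.ι φ := by rw [assoc, hjr, comp_id, S.p_descOpcycles_assoc]

end IsProperXResolution

theorem stmt10 (𝒳 𝒴 ℰ : Set A) (hbp : IsBalancedPair 𝒳 𝒴) (hadm : XAdmissible 𝒳)
    (hext : ClosedUnderStarExt 𝒳 𝒴 ℰ) {E M : A} (φ : E ⟶ M)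
    (hmin : IsMinimalRightApprox ℰ φ) :
    ∀ E' ∈ ℰ, ExtStarVanish 𝒳 1 E' (kernel φ) := by
  intro E' hE' P ε hP
  obtain ⟨P', ε', hP', hP'Y⟩ := hbp.2.2.1 E'
  exact IsProperXResolution.homH1Vanishes_kernel hbp.1 hadm hext hmin hE' hP fun Y hY =>
    hP.homH1Vanishes_of_homH1Vanishes hP' (hP'Y.homH1Vanishes hY)
end
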